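/- arXiv:2104.13251 — 3 statements merged into one kernel-verified Lean document; each statement's English description precedes it below -/
import Mathlib

section
/- As formal power series identity: ∑_{(d₁,d₂) ∈ ℕ²} (-q^{1/2})^{-(d₁-d₂)²} / ((q^{-1};q^{-1})_{d₁} (q^{-1};q^{-1})_{d₂}) · t₁^{d₁} t₂^{d₂} equals the product Exp(q t₁t₂/(q-1)) · Exp(-q^{1/2} t₁/(q-1)) · Exp(-q^{1/2} t₂/(q-1)), where Exp is the plethystic exponential, i.e. Exp(∑_{d,k} c_{d,k} q^{k/2} t^d) = ∏_{d,k} (1 - q^{k/2} t^d)^{-c_{d,k}}. -/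
/-!
Write `u = q^{-1/2}` and `w = u² = q⁻¹`. Both sides are power series `φ` with constant
coefficient `1` solving, for `s = 1, 2`, the `q`-difference equation
`(1 - t₁t₂) φ(t) = (1 - u t_s) φ(t)|_{t_s ↦ w t_s}`, and these equations have at most one such
solution: at a monomial `t^n` with `n_s > 0` they express `(1 - w^{n_s}) φ_n` through coefficients
of lower index.

For the sum this is a two-term recurrence for its explicit coefficients. For each product
`P = ∏_j F_j` the substitution `t_s ↦ w t_s` either shifts the factors (`F_j ↦ F_{j+1}`) or fixes
them, so `P = F_0 · P|_{t_s ↦ w t_s}` or `P = P|_{t_s ↦ w t_s}`. The products converge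
coefficientwise in the `u`-adic topology because `F_j - 1` has all coefficients divisible by
`u^{2j}`.
-/

open scoped LaurentSeries

/-- Pi (coefficient-wise) topology on power series in `t₁, t₂` over the Laurent series
field `ℚ⸨u⸩`, where `u = q^{-1/2}` carries its `u`-adic (valued) topology. -/
noncomputable instance : TopologicalSpace (MvPowerSeries (Fin 2) (LaurentSeries ℚ)) :=
  inferInstanceAs (TopologicalSpace ((Fin 2 →₀ ℕ) → LaurentSeries ℚ))

/-- `u = q^{-1/2}` in the Laurent series field. -/
noncomputable def uL : LaurentSeries ℚ := ((PowerSeries.X : PowerSeries ℚ) : LaurentSeries ℚ)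

/-- `q^{1/2} = u⁻¹`. -/
noncomputable def qh : LaurentSeries ℚ := uL⁻¹

/-- `(q^{-1}; q^{-1})_m = ∏_{i=1}^m (1 - q^{-i})`, with `q^{-i} = u^{2i}`. -/
noncomputable def pochInv (m : ℕ) : LaurentSeries ℚ :=
  ∏ i ∈ Finset.range m, (1 - uL ^ (2 * (i + 1)))

open Filter Topology

theorem Finsupp.prod_pow_mulSingle {σ M : Type*} [CommMonoid M] [DecidableEq σ] (n : σ →₀ ℕ)
    (s : σ) (c : M) : (n.prod fun t m => (Pi.mulSingle s c : σ → M) t ^ m) = c ^ n s := by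
  rw [Finsupp.prod_eq_single s (fun t _ ht => by simp [ht]) (fun _ => by simp),
    Pi.mulSingle_eq_same]

theorem HasProd.eq_mul_map_of_map_succ {M G : Type*} [CommMonoid M] [TopologicalSpace M]
    [ContinuousMul M] [T2Space M] [FunLike G M M] [MonoidHomClass G M M] {F : ℕ → M} {P : M}
    (hP : HasProd F P) (g : G) (hg : Continuous g) (hF : ∀ j, F (j + 1) = g (F j)) :
    P = F 0 * g P :=
  hP.unique <| HasProd.zero_mul <| by
    convert hP.map g hg using 1
    exact funext hF

namespace Valued

variable {R Γ₀ : Type*} [LinearOrderedCommGroupWithZero Γ₀]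

theorem nonarchimedeanRing [Ring R] [Valued R Γ₀] : NonarchimedeanRing R := by
  have : (toUniformSpace : UniformSpace R).toTopologicalSpace = v.subgroups_basis.topology := by
    rw [toUniformSpace_eq R Γ₀]; rfl
  convert (v (R := R)).subgroups_basis.nonarchimedean

theorem tendsto_zero_of_valuation_le [Ring R] [Valued R Γ₀] {α : Type*} {l : Filter α}
    {x y : α → R} (hy : Tendsto y l (𝓝 0)) (h : ∀ a, v (x a) ≤ v (y a)) :
    Tendsto x l (𝓝 0) := by
  rw [(hasBasis_nhds_zero R Γ₀).tendsto_right_iff] at hy ⊢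
  exact fun γ _ => (hy γ trivial).mono fun a ha => (v.restrict_le_iff.2 (h a)).trans_lt ha

theorem tendsto_finset_prod_cofinite_zero [CommRing R] [Valued R Γ₀] {ι : Type*} {c : ι → R}
    (hc : Tendsto c cofinite (𝓝 0)) (hc₁ : ∀ i, v (c i) ≤ 1) :
    Tendsto (fun s : Finset ι => ∏ i ∈ s, c i) cofinite (𝓝 0) := by
  classical
  rw [(hasBasis_nhds_zero R Γ₀).tendsto_right_iff] at hc ⊢
  intro γ _
  have hsmall := hc γ trivial
  rw [eventually_cofinite] at hsmall ⊢
  refine hsmall.toFinset.powerset.finite_toSet.subset fun s hs => ?_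
  simp only [Finset.coe_powerset, Set.mem_preimage, Set.mem_powerset_iff,
    Set.Finite.coe_toFinset]
  intro i hi
  by_contra hi_small
  refine hs (lt_of_le_of_lt (v.restrict_le_iff.2 ?_) (not_not.1 hi_small))
  rw [map_prod, ← Finset.mul_prod_erase s _ hi]
  exact mul_le_of_le_one_right' (Finset.prod_le_one' fun j _ => hc₁ j)

end Valued

namespace MvPowerSeries

variable {σ R : Type*}

theorem C_mul_X_eq_monomial [Semiring R] (s : σ) (c : R) :
    C c * X s = monomial (Finsupp.single s 1) c := by
  rw [X_def, ← monomial_zero_eq_C, monomial_mul_monomial, zero_add, mul_one]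

section Valuation

variable {Γ₀ : Type*} [LinearOrderedCommGroupWithZero Γ₀]

theorem valuation_coeff_monomial_le [Ring R] (v : Valuation R Γ₀) (e n : σ →₀ ℕ) (c : R) :
    v (coeff n (monomial e c)) ≤ v c := by
  classical
  rw [coeff_monomial]
  split_ifs <;> simp

theorem valuation_coeff_mul_le [CommRing R] (v : Valuation R Γ₀) {φ ψ : MvPowerSeries σ R}
    {α β : Γ₀} (hφ : ∀ n, v (coeff n φ) ≤ α) (hψ : ∀ n, v (coeff n ψ) ≤ β) (n : σ →₀ ℕ) :
    v (coeff n (φ * ψ)) ≤ α * β := by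
  classical
  rw [coeff_mul]
  exact v.map_sum_le fun p _ => (v.map_mul _ _).trans_le (mul_le_mul' (hφ _) (hψ _))

theorem valuation_coeff_prod_le [CommRing R] (v : Valuation R Γ₀) {ι : Type*} (s : Finset ι)
    {f : ι → MvPowerSeries σ R} {γ : ι → Γ₀} (hf : ∀ i ∈ s, ∀ n, v (coeff n (f i)) ≤ γ i)
    (n : σ →₀ ℕ) : v (coeff n (∏ i ∈ s, f i)) ≤ ∏ i ∈ s, γ i := by
  classical
  induction s using Finset.induction_on generalizing n with
  | empty =>
    rw [Finset.prod_empty, Finset.prod_empty, ← monomial_zero_one]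
    exact (valuation_coeff_monomial_le v 0 n 1).trans_eq v.map_one
  | insert i s hi ih =>
    rw [Finset.prod_insert hi, Finset.prod_insert hi]
    exact valuation_coeff_mul_le v (hf i (Finset.mem_insert_self i s))
      (ih fun j hj => hf j (Finset.mem_insert_of_mem hj)) n

theorem valuation_coeff_inv_le_one [Field R] (v : Valuation R Γ₀) {φ : MvPowerSeries σ R}
    (h₀ : constantCoeff φ = 1) (hφ : ∀ n, v (coeff n φ) ≤ 1) (n : σ →₀ ℕ) :
    v (coeff n φ⁻¹) ≤ 1 := by
  classical
  induction n using WellFoundedLT.induction with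
  | _ n ih =>
  rw [coeff_inv, h₀, inv_one]
  split_ifs
  · simp
  · rw [neg_one_mul, v.map_neg]
    refine v.map_sum_le fun p _ => ?_
    split_ifs with hlt
    · exact (v.map_mul _ _).trans_le (mul_le_one' (hφ _) (ih _ hlt))
    · simp

end Valuation

section Rescale

theorem coeff_rescale_mulSingle [CommSemiring R] [DecidableEq σ] (s : σ) (c : R)
    (φ : MvPowerSeries σ R) (n : σ →₀ ℕ) :
    coeff n (rescale (Pi.mulSingle s c) φ) = c ^ n s * coeff n φ := by
  rw [coeff_rescale, Finsupp.prod_pow_mulSingle]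

theorem rescale_monomial [CommSemiring R] (a : σ → R) (n : σ →₀ ℕ) (c : R) :
    rescale a (monomial n c) = monomial n ((n.prod fun s m => a s ^ m) * c) := by
  classical
  ext m
  rw [coeff_rescale, coeff_monomial, coeff_monomial]
  split_ifs with h
  · rw [h]
  · rw [mul_zero]

theorem rescale_mulSingle_monomial [CommSemiring R] [DecidableEq σ] (s : σ) (c : R)
    (n : σ →₀ ℕ) (a : R) :
    rescale (Pi.mulSingle s c) (monomial n a) = monomial n (c ^ n s * a) := by
  rw [rescale_monomial, Finsupp.prod_pow_mulSingle]

theorem constantCoeff_rescale [CommSemiring R] (a : σ → R) (φ : MvPowerSeries σ R) :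
    constantCoeff (rescale a φ) = constantCoeff φ := by
  rw [← coeff_zero_eq_constantCoeff_apply, coeff_rescale, Finsupp.prod_zero_index, one_mul,
    coeff_zero_eq_constantCoeff_apply]

theorem rescale_inv [Field R] (a : σ → R) {φ : MvPowerSeries σ R} (h : constantCoeff φ ≠ 0) :
    rescale a φ⁻¹ = (rescale a φ)⁻¹ := by
  rw [MvPowerSeries.eq_inv_iff_mul_eq_one (by rwa [constantCoeff_rescale]), ← map_mul,
    MvPowerSeries.inv_mul_cancel _ h, map_one]

theorem eq_zero_of_forall_one_sub_monomial_mul_eq [CommRing R] [NoZeroDivisors R]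
    [DecidableEq σ] {d : σ →₀ ℕ} (hd : d ≠ 0) {b c : R} (hc : ∀ k ≠ 0, c ^ k ≠ 1)
    {φ : MvPowerSeries σ R} (h₀ : constantCoeff φ = 0)
    (h : ∀ s, (1 - monomial d 1) * φ =
      (1 - monomial (Finsupp.single s 1) b) * rescale (Pi.mulSingle s c) φ) :
    φ = 0 := by
  ext n
  induction n using WellFoundedLT.induction with
  | _ n ih =>
  simp only [map_zero] at ih ⊢
  obtain rfl | ⟨s, hs⟩ := (eq_or_ne n 0).imp_right Finsupp.ne_iff.1
  · rwa [coeff_zero_eq_constantCoeff_apply]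
  have below : ∀ e : σ →₀ ℕ, e ≠ 0 → e ≤ n → coeff (n - e) φ = 0 := fun e he hen =>
    ih _ <| lt_of_le_of_ne tsub_le_self fun heq => he <| by
      simpa [heq] using tsub_add_cancel_of_le hen
  have hn := congrArg (coeff n) (h s)
  simp only [sub_mul, one_mul, map_sub, coeff_monomial_mul, coeff_rescale_mulSingle] at hn
  rw [ite_eq_right_iff.2 fun hdn => below d hd hdn,
    ite_eq_right_iff.2 fun hsn => by rw [below _ (by simp) hsn, mul_zero, mul_zero],
    sub_zero, sub_zero, ← sub_eq_zero, ← one_sub_mul] at hn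
  exact (mul_eq_zero.1 hn).resolve_left (sub_ne_zero.2 (hc _ hs).symm)

end Rescale

namespace WithPiTopology

theorem continuous_rescale [CommSemiring R] [TopologicalSpace R] [IsTopologicalSemiring R]
    (a : σ → R) : Continuous (rescale a : MvPowerSeries σ R → MvPowerSeries σ R) :=
  continuous_pi fun n => continuous_const.mul (continuous_apply n)

theorem multipliable_one_add_of_valuation_coeff_le {Γ₀ : Type*}
    [LinearOrderedCommGroupWithZero Γ₀] [CommRing R] [Valued R Γ₀] [CompleteSpace R]
    {ι : Type*} {f : ι → MvPowerSeries σ R} {c : ι → R} (hc : Tendsto c cofinite (𝓝 0))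
    (hc₁ : ∀ i, Valued.v (c i) ≤ 1) (hf : ∀ i n, Valued.v (coeff n (f i)) ≤ Valued.v (c i)) :
    Multipliable (1 + f ·) := by
  have := Valued.nonarchimedeanRing (R := R)
  refine multipliable_one_add_of_summable_prod (summable_iff_summable_coeff.2 fun n => ?_)
  refine NonarchimedeanAddGroup.summable_of_tendsto_cofinite_zero
    (Valued.tendsto_zero_of_valuation_le (Valued.tendsto_finset_prod_cofinite_zero hc hc₁) ?_)
  intro s
  rw [map_prod (Valued.v : Valuation R Γ₀)]
  exact valuation_coeff_prod_le _ s (fun i _ => hf i) n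

end WithPiTopology

end MvPowerSeries

open MvPowerSeries

theorem valuation_uL_pow (k : ℕ) : Valued.v (uL ^ k) = WithZero.exp (-(k : ℤ)) :=
  LaurentSeries.valuation_X_pow ℚ k

theorem uL_ne_zero : uL ≠ 0 := fun h => by
  have h₁ := valuation_uL_pow 1
  rw [h, zero_pow one_ne_zero, map_zero] at h₁
  exact WithZero.exp_ne_zero h₁.symm

theorem uL_pow_ne_one {k : ℕ} (hk : k ≠ 0) : uL ^ k ≠ 1 := fun h => by
  simpa [h, hk] using valuation_uL_pow k

theorem one_sub_uL_sq_pow_ne_zero {k : ℕ} (hk : k ≠ 0) : 1 - (uL ^ 2) ^ k ≠ 0 :=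
  sub_ne_zero.2 (by rw [← pow_mul]; exact (uL_pow_ne_one (by omega)).symm)

theorem valuation_uL_pow_le_one (k : ℕ) : Valued.v (uL ^ k) ≤ 1 := by
  rw [valuation_uL_pow, ← WithZero.exp_zero, WithZero.exp_le_exp]
  omega

theorem tendsto_uL_pow_two_mul : Tendsto (fun j : ℕ => uL ^ (2 * j)) cofinite (𝓝 0) := by
  simpa [Nat.cofinite_eq_atTop, pow_mul] using
    Valued.tendsto_zero_pow_of_le_exp_neg_one (x := uL ^ 2) <| by
      rw [valuation_uL_pow, WithZero.exp_le_exp]; omega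

theorem neg_uL_zpow_mul_pow (m : ℤ) (k : ℕ) : (-uL) ^ m * (-uL) ^ k = (-uL) ^ (m + k) := by
  rw [← zpow_natCast, zpow_add₀ (neg_ne_zero.2 uL_ne_zero)]

theorem pochInv_zero : pochInv 0 = 1 := Finset.prod_range_zero _

theorem pochInv_succ (m : ℕ) : pochInv (m + 1) = pochInv m * (1 - (uL ^ 2) ^ (m + 1)) := by
  rw [pochInv, Finset.prod_range_succ, pow_mul]; rfl

theorem pochInv_ne_zero (m : ℕ) : pochInv m ≠ 0 :=
  Finset.prod_ne_zero_iff.2 fun i _ => sub_ne_zero.2 (uL_pow_ne_one (by omega)).symm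

noncomputable def c2Coeff (a b : ℕ) : LaurentSeries ℚ :=
  (-qh) ^ (-(((a : ℤ) - (b : ℤ)) ^ 2)) / (pochInv a * pochInv b)

theorem c2Coeff_eq (a b : ℕ) :
    c2Coeff a b = (-uL) ^ (((a : ℤ) - b) ^ 2) / (pochInv a * pochInv b) := by
  rw [c2Coeff, qh, ← inv_neg, inv_zpow', neg_neg]

theorem c2Coeff_comm (a b : ℕ) : c2Coeff a b = c2Coeff b a := by
  rw [c2Coeff, c2Coeff, mul_comm (pochInv a), ← neg_sq ((a : ℤ) - b), neg_sub]

theorem c2Coeff_zero_zero : c2Coeff 0 0 = 1 := by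
  simp [c2Coeff, pochInv]

theorem c2Coeff_succ_zero (a : ℕ) :
    c2Coeff (a + 1) 0 * (1 - (uL ^ 2) ^ (a + 1)) = -(uL * ((uL ^ 2) ^ a * c2Coeff a 0)) := by
  have hexp : (-uL) ^ ((((a + 1 : ℕ) : ℤ) - ((0 : ℕ) : ℤ)) ^ 2)
      = (-uL) ^ (((a : ℤ) - ((0 : ℕ) : ℤ)) ^ 2) * -uL ^ (2 * a + 1) := by
    rw [← Odd.neg_pow ⟨a, rfl⟩, neg_uL_zpow_mul_pow]; congr 1; push_cast; ring
  have hA := one_sub_uL_sq_pow_ne_zero (Nat.succ_ne_zero a)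
  have hP := pochInv_ne_zero a
  rw [c2Coeff_eq, c2Coeff_eq, hexp, pochInv_succ, pochInv_zero]
  generalize (uL ^ 2) ^ (a + 1) = A at *
  field_simp
  ring

theorem c2Coeff_succ_succ (a b : ℕ) :
    c2Coeff (a + 1) (b + 1) * (1 - (uL ^ 2) ^ (a + 1))
      = c2Coeff a b - uL * ((uL ^ 2) ^ a * c2Coeff a (b + 1)) := by
  have hexp : (-uL) ^ (((a : ℤ) - ((b + 1 : ℕ) : ℤ)) ^ 2) * uL ^ (2 * a + 1)
      = -((-uL) ^ (((a : ℤ) - b) ^ 2) * (uL ^ 2) ^ (b + 1)) := by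
    have h := neg_uL_zpow_mul_pow (((a : ℤ) - ((b + 1 : ℕ) : ℤ)) ^ 2) (2 * a + 1)
    rw [Odd.neg_pow ⟨a, rfl⟩, show (((a : ℤ) - ((b + 1 : ℕ) : ℤ)) ^ 2 + ((2 * a + 1 : ℕ) : ℤ))
      = ((a : ℤ) - b) ^ 2 + ((2 * (b + 1) : ℕ) : ℤ) by push_cast; ring,
      ← neg_uL_zpow_mul_pow, Even.neg_pow ⟨b + 1, by ring⟩, pow_mul] at h
    linear_combination -h
  have hsucc : (((a + 1 : ℕ) : ℤ) - ((b + 1 : ℕ) : ℤ)) = (a : ℤ) - b := by push_cast; ring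
  have hA := one_sub_uL_sq_pow_ne_zero (Nat.succ_ne_zero a)
  have hB := one_sub_uL_sq_pow_ne_zero (Nat.succ_ne_zero b)
  have hPa := pochInv_ne_zero a
  have hPb := pochInv_ne_zero b
  rw [c2Coeff_eq, c2Coeff_eq, c2Coeff_eq, hsucc, pochInv_succ, pochInv_succ,
    show uL * ((uL ^ 2) ^ a * ((-uL) ^ (((a : ℤ) - ((b + 1 : ℕ) : ℤ)) ^ 2)
      / (pochInv a * (pochInv b * (1 - (uL ^ 2) ^ (b + 1))))))
      = -((-uL) ^ (((a : ℤ) - b) ^ 2) * (uL ^ 2) ^ (b + 1))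
        / (pochInv a * (pochInv b * (1 - (uL ^ 2) ^ (b + 1)))) by rw [← hexp]; ring]
  generalize (uL ^ 2) ^ (a + 1) = A at *
  generalize (uL ^ 2) ^ (b + 1) = B at *
  field_simp
  ring

theorem c2Coeff_rec (a b : ℕ) :
    c2Coeff a b - (if 1 ≤ a ∧ 1 ≤ b then c2Coeff (a - 1) (b - 1) else 0)
      = (uL ^ 2) ^ a * c2Coeff a b
        - (if 1 ≤ a then uL * ((uL ^ 2) ^ (a - 1) * c2Coeff (a - 1) b) else 0) := by
  rcases a with _ | a
  · simp
  rcases b with _ | b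
  · rw [if_neg (by omega), if_pos (by omega), Nat.add_sub_cancel, sub_zero]
    linear_combination c2Coeff_succ_zero a
  · rw [if_pos (by omega), if_pos (by omega), Nat.add_sub_cancel, Nat.add_sub_cancel]
    linear_combination c2Coeff_succ_succ a b

local notation "R₂" => MvPowerSeries (Fin 2) (LaurentSeries ℚ)

-- The topology on `R₂` is definitionally that of `MvPowerSeries.WithPiTopology`.
instance : IsTopologicalRing R₂ := WithPiTopology.instIsTopologicalRing _ _

instance : T2Space R₂ := WithPiTopology.instT2Space

theorem continuous_rescale_fin_two (a : Fin 2 → LaurentSeries ℚ) :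
    Continuous (rescale a : R₂ → R₂) :=
  WithPiTopology.continuous_rescale a

theorem continuous_constantCoeff_fin_two : Continuous (constantCoeff : R₂ → LaurentSeries ℚ) :=
  WithPiTopology.continuous_constantCoeff _

theorem C_mul_X_zero_mul_X_one (c : LaurentSeries ℚ) :
    (C c * X 0 * X 1 : R₂) = monomial (Finsupp.single 0 1 + Finsupp.single 1 1) c := by
  rw [C_mul_X_eq_monomial, X_def, monomial_mul_monomial, mul_one]

theorem X_zero_mul_X_one :
    (X 0 * X 1 : R₂) = monomial (Finsupp.single 0 1 + Finsupp.single 1 1) 1 := by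
  rw [← C_mul_X_zero_mul_X_one, map_one, one_mul]

noncomputable def c2Series : R₂ := fun n => c2Coeff (n 0) (n 1)

@[simp]
theorem coeff_c2Series (n : Fin 2 →₀ ℕ) : coeff n c2Series = c2Coeff (n 0) (n 1) := rfl

theorem constantCoeff_c2Series : constantCoeff c2Series = 1 := by
  rw [← coeff_zero_eq_constantCoeff_apply, coeff_c2Series]
  exact c2Coeff_zero_zero

theorem hasSum_c2Series :
    HasSum (fun d : ℕ × ℕ => C (c2Coeff d.1 d.2) * X 0 ^ d.1 * X 1 ^ d.2 : ℕ × ℕ → R₂)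
      c2Series := by
  let e : ℕ × ℕ ≃ (Fin 2 →₀ ℕ) := (finTwoArrowEquiv ℕ).symm.trans Finsupp.equivFunOnFinite.symm
  have he : ∀ d, e d = Finsupp.single 0 d.1 + Finsupp.single 1 d.2 := fun d => by
    ext i; fin_cases i <;> simp [e]
  convert e.hasSum_iff.2 (WithPiTopology.hasSum_of_monomials_self c2Series) using 1
  · rfl
  funext d
  simp [he, X_pow_eq, ← monomial_zero_eq_C, monomial_mul_monomial]

/-- `(1 - t₁t₂) φ(t) = (1 - q^{-1/2} t_s) φ(t)|_{t_s ↦ q⁻¹ t_s}` for `s = 1, 2`. -/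
def SatisfiesC2Equations (φ : R₂) : Prop :=
  ∀ s, (1 - X 0 * X 1) * φ = (1 - C uL * X s) * rescale (Pi.mulSingle s (uL ^ 2)) φ

theorem SatisfiesC2Equations.eq {φ ψ : R₂} (hφ : SatisfiesC2Equations φ)
    (hψ : SatisfiesC2Equations ψ) (h₀ : constantCoeff φ = constantCoeff ψ) : φ = ψ := by
  refine sub_eq_zero.1 <| eq_zero_of_forall_one_sub_monomial_mul_eq
    (d := Finsupp.single 0 1 + Finsupp.single 1 1) (by simp) (b := uL) (c := uL ^ 2)
    (fun k hk => by rw [← pow_mul]; exact uL_pow_ne_one (by omega))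
    (by rw [map_sub, h₀, sub_self]) fun s => ?_
  rw [← X_zero_mul_X_one, ← C_mul_X_eq_monomial, map_sub, mul_sub, mul_sub, hφ s, hψ s]

theorem c2Series_satisfiesC2Equations : SatisfiesC2Equations c2Series := by
  intro s
  refine MvPowerSeries.ext fun n => ?_
  rw [X_zero_mul_X_one, C_mul_X_eq_monomial]
  simp only [sub_mul, one_mul, map_sub, coeff_monomial_mul, coeff_rescale_mulSingle]
  fin_cases s
  · simpa [Finsupp.le_def, Fin.forall_fin_two] using c2Coeff_rec (n 0) (n 1)
  · simpa [Finsupp.le_def, Fin.forall_fin_two, c2Coeff_comm (n 0), c2Coeff_comm (n 0 - 1),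
      and_comm] using c2Coeff_rec (n 1) (n 0)

noncomputable def plethDiag : R₂ := ∏' j : ℕ, (1 - C (uL ^ (2 * j)) * X 0 * X 1)⁻¹

noncomputable def plethVar (s : Fin 2) : R₂ := ∏' j : ℕ, (1 - C (uL ^ (2 * j + 1)) * X s)

theorem multipliable_one_sub_C_mul_X (s : Fin 2) :
    Multipliable fun j : ℕ => (1 - C (uL ^ (2 * j + 1)) * X s : R₂) := by
  have hc : Tendsto (fun j : ℕ => uL ^ (2 * j + 1)) cofinite (𝓝 0) := by
    simpa [pow_succ] using tendsto_uL_pow_two_mul.mul_const uL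
  simp only [sub_eq_add_neg]
  exact WithPiTopology.multipliable_one_add_of_valuation_coeff_le hc
    (fun j => valuation_uL_pow_le_one _) fun j n => by
      rw [map_neg, Valuation.map_neg, C_mul_X_eq_monomial]
      exact valuation_coeff_monomial_le _ _ _ _

theorem constantCoeff_one_sub_C_mul_X_mul_X (c : LaurentSeries ℚ) :
    constantCoeff (1 - C c * X 0 * X 1 : R₂) = 1 := by
  simp

theorem valuation_coeff_inv_one_sub_C_mul_X_mul_X_le_one {c : LaurentSeries ℚ}
    (hc : Valued.v c ≤ 1) (n : Fin 2 →₀ ℕ) :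
    Valued.v (coeff n (1 - C c * X 0 * X 1 : R₂)⁻¹) ≤ 1 := by
  refine valuation_coeff_inv_le_one _ (constantCoeff_one_sub_C_mul_X_mul_X c) (fun n => ?_) n
  rw [C_mul_X_zero_mul_X_one, ← monomial_zero_one, map_sub]
  exact (Valuation.map_sub _ _ _).trans <| max_le
    ((valuation_coeff_monomial_le _ _ n 1).trans_eq (map_one _))
    ((valuation_coeff_monomial_le _ _ n c).trans hc)

theorem multipliable_inv_one_sub_C_mul_X_mul_X :
    Multipliable fun j : ℕ => (1 - C (uL ^ (2 * j)) * X 0 * X 1 : R₂)⁻¹ := by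
  have hinv : ∀ c : LaurentSeries ℚ, (1 - C c * X 0 * X 1 : R₂)⁻¹
      = 1 + C c * (X 0 * X 1 * (1 - C c * X 0 * X 1)⁻¹) := fun c => by
    have h := MvPowerSeries.mul_inv_cancel (1 - C c * X 0 * X 1 : R₂)
      (by rw [constantCoeff_one_sub_C_mul_X_mul_X]; exact one_ne_zero)
    linear_combination h
  have hm : Multipliable fun j : ℕ =>
      1 + C (uL ^ (2 * j)) * (X 0 * X 1 * (1 - C (uL ^ (2 * j)) * X 0 * X 1 : R₂)⁻¹) := by
    refine WithPiTopology.multipliable_one_add_of_valuation_coeff_le tendsto_uL_pow_two_mul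
      (fun j => valuation_uL_pow_le_one _) fun j n => ?_
    rw [coeff_C_mul, Valuation.map_mul]
    refine mul_le_of_le_one_right' ((valuation_coeff_mul_le _ (fun n => ?_)
      (valuation_coeff_inv_one_sub_C_mul_X_mul_X_le_one (valuation_uL_pow_le_one _)) n).trans_eq
      (one_mul _))
    rw [X_zero_mul_X_one]
    exact (valuation_coeff_monomial_le _ _ n 1).trans_eq (map_one _)
  exact hm.congr fun j => (hinv _).symm

theorem rescale_one_sub_C_mul_X (s t : Fin 2) (c : LaurentSeries ℚ) :
    rescale (Pi.mulSingle s (uL ^ 2)) (1 - C c * X t : R₂)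
      = 1 - C ((uL ^ 2) ^ (Finsupp.single t 1 s) * c) * X t := by
  rw [map_sub, map_one, C_mul_X_eq_monomial, rescale_mulSingle_monomial, C_mul_X_eq_monomial]

theorem rescale_one_sub_C_mul_X_mul_X (s : Fin 2) (c : LaurentSeries ℚ) :
    rescale (Pi.mulSingle s (uL ^ 2)) (1 - C c * X 0 * X 1 : R₂)
      = 1 - C (uL ^ 2 * c) * X 0 * X 1 := by
  rw [map_sub, map_one, C_mul_X_zero_mul_X_one, rescale_mulSingle_monomial,
    C_mul_X_zero_mul_X_one]
  fin_cases s <;> simp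

theorem plethVar_eq (s : Fin 2) :
    plethVar s = (1 - C uL * X s) * rescale (Pi.mulSingle s (uL ^ 2)) (plethVar s) := by
  have h := (multipliable_one_sub_C_mul_X s).hasProd.eq_mul_map_of_map_succ
    (rescale (Pi.mulSingle s (uL ^ 2))) (continuous_rescale_fin_two _) fun j => by
      rw [rescale_one_sub_C_mul_X, Finsupp.single_eq_same, pow_one, ← pow_add]; ring_nf
  rwa [mul_zero, zero_add, pow_one] at h

theorem rescale_plethVar_of_ne {s t : Fin 2} (h : t ≠ s) :
    rescale (Pi.mulSingle s (uL ^ 2)) (plethVar t) = plethVar t := by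
  rw [plethVar, (multipliable_one_sub_C_mul_X t).map_tprod _ (continuous_rescale_fin_two _)]
  refine tprod_congr fun j => ?_
  rw [rescale_one_sub_C_mul_X, Finsupp.single_apply, if_neg h, pow_zero, one_mul]

theorem one_sub_X_mul_X_mul_plethDiag (s : Fin 2) :
    (1 - X 0 * X 1) * plethDiag = rescale (Pi.mulSingle s (uL ^ 2)) plethDiag := by
  have h := multipliable_inv_one_sub_C_mul_X_mul_X.hasProd.eq_mul_map_of_map_succ
    (rescale (Pi.mulSingle s (uL ^ 2))) (continuous_rescale_fin_two _) fun j => by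
      rw [rescale_inv _ (by rw [constantCoeff_one_sub_C_mul_X_mul_X]; exact one_ne_zero),
        rescale_one_sub_C_mul_X_mul_X]; ring_nf
  change plethDiag = _ * rescale _ plethDiag at h
  nth_rewrite 1 [h]
  rw [mul_zero, pow_zero, map_one, one_mul, ← mul_assoc,
    MvPowerSeries.mul_inv_cancel _ (by simp), one_mul]

theorem one_sub_X_mul_X_mul_eq_of_factors {s : Fin 2} {A B B' : R₂}
    (hA : (1 - X 0 * X 1) * A = rescale (Pi.mulSingle s (uL ^ 2)) A)
    (hB : B = (1 - C uL * X s) * rescale (Pi.mulSingle s (uL ^ 2)) B)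
    (hB' : rescale (Pi.mulSingle s (uL ^ 2)) B' = B') :
    (1 - X 0 * X 1) * (A * B * B')
      = (1 - C uL * X s) * rescale (Pi.mulSingle s (uL ^ 2)) (A * B * B') := by
  rw [map_mul, map_mul, hB', ← hA]
  nth_rewrite 1 [hB]
  ring

theorem plethDiag_mul_plethVar_satisfiesC2Equations :
    SatisfiesC2Equations (plethDiag * plethVar 0 * plethVar 1) := by
  intro s
  fin_cases s
  · exact one_sub_X_mul_X_mul_eq_of_factors (one_sub_X_mul_X_mul_plethDiag 0) (plethVar_eq 0)
      (rescale_plethVar_of_ne (by decide))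
  · rw [mul_right_comm]
    exact one_sub_X_mul_X_mul_eq_of_factors (one_sub_X_mul_X_mul_plethDiag 1) (plethVar_eq 1)
      (rescale_plethVar_of_ne (by decide))

theorem constantCoeff_plethDiag : constantCoeff plethDiag = 1 := by
  rw [plethDiag, multipliable_inv_one_sub_C_mul_X_mul_X.map_tprod _
    continuous_constantCoeff_fin_two]
  simp [constantCoeff_inv]

theorem constantCoeff_plethVar (s : Fin 2) : constantCoeff (plethVar s) = 1 := by
  rw [plethVar, (multipliable_one_sub_C_mul_X s).map_tprod _ continuous_constantCoeff_fin_two]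
  simp

/-- The generating series of the cyclic quiver `C₂`:
`∑_{(d₁,d₂) ∈ ℕ²} (-q^{1/2})^{-(d₁-d₂)²} / ((q⁻¹;q⁻¹)_{d₁} (q⁻¹;q⁻¹)_{d₂}) t₁^{d₁} t₂^{d₂}`
equals `Exp(q t₁t₂/(q-1)) · Exp(-q^{1/2} t₁/(q-1)) · Exp(-q^{1/2} t₂/(q-1))`, where the
plethystic exponentials expand as the infinite products
`∏_{j≥0} (1 - q^{-j} t₁t₂)⁻¹`, `∏_{j≥0} (1 - q^{-1/2-j} t₁)` and
`∏_{j≥0} (1 - q^{-1/2-j} t₂)`. -/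
theorem C2_generating_series :
    (∑' d : ℕ × ℕ,
      (MvPowerSeries.C : LaurentSeries ℚ →+* MvPowerSeries (Fin 2) (LaurentSeries ℚ))
          ((-qh) ^ (-(((d.1 : ℤ) - (d.2 : ℤ)) ^ 2)) / (pochInv d.1 * pochInv d.2)) *
        (MvPowerSeries.X 0 : MvPowerSeries (Fin 2) (LaurentSeries ℚ)) ^ d.1 *
        (MvPowerSeries.X 1 : MvPowerSeries (Fin 2) (LaurentSeries ℚ)) ^ d.2)
    = (∏' j : ℕ, (1 - (MvPowerSeries.C : LaurentSeries ℚ →+* MvPowerSeries (Fin 2) (LaurentSeries ℚ)) (uL ^ (2 * j)) *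
          MvPowerSeries.X 0 * MvPowerSeries.X 1)⁻¹) *
      (∏' j : ℕ, (1 - (MvPowerSeries.C : LaurentSeries ℚ →+* MvPowerSeries (Fin 2) (LaurentSeries ℚ)) (uL ^ (2 * j + 1)) *
          MvPowerSeries.X 0)) *
      (∏' j : ℕ, (1 - (MvPowerSeries.C : LaurentSeries ℚ →+* MvPowerSeries (Fin 2) (LaurentSeries ℚ)) (uL ^ (2 * j + 1)) *
          MvPowerSeries.X 1)) := by
  refine hasSum_c2Series.tsum_eq.trans <|
    c2Series_satisfiesC2Equations.eq plethDiag_mul_plethVar_satisfiesC2Equations ?_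
  change constantCoeff c2Series = constantCoeff (plethDiag * plethVar 0 * plethVar 1)
  rw [map_mul, map_mul, constantCoeff_c2Series, constantCoeff_plethDiag, constantCoeff_plethVar,
    constantCoeff_plethVar, mul_one, mul_one]
end

section
/- For the quiver Q'' of type D̂_r with vertices 0,…,r (arrows 0→2, 1→2, 2→3, …, r-3→r-2, r-2→r-1, r-2→r), the linear map τ on ℤ^{r+1} defined as the negative inverse Coxeter-type transformation (induced by the Auslander–Reiten translation) satisfies: τ(e₂)=e₃, τ(e₃)=e₄, …, τ(e_{r-3})=e_{r-2}, τ(e_{r-2})=ρ, τ(ρ)=e₂, τ(e_{r-1})=-ρ+e_r, τ(e_r)=-ρ+e_{r-1}, τ(e₀)=e₁+e₂, τ(e₁)=e₀+e₂, where ρ = e₀+e₁+⋯+e_r. -/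
/-! Since `τ` is linear, it suffices to write each vector as an integer combination of the
`dim P i`. For a vertex `k` the projective resolution of the simple module gives
`e_k = dim P k - ∑_{k → l} dim P l`, and `ρ = dim P 0 + dim P 1 - dim P 2`; applying
`τ (dim P i) = -dim I i` leaves a coordinatewise identity between path counts. -/

/-- Dimension vector of the indecomposable projective `P i` over the `D̂_r` quiver with
arrows `0→2, 1→2, 2→3, …, (r-3)→(r-2), (r-2)→(r-1), (r-2)→r`:
`(dim P i) j` is the number of paths from `i` to `j`. -/
def dimP (r : ℕ) (i j : Fin (r + 1)) : ℤ :=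
  if i = j then 1
  else if i.val ≤ 1 then (if 2 ≤ j.val then 1 else 0)
  else if i.val ≤ r - 2 ∧ i.val ≤ j.val then 1 else 0

/-- Dimension vector of the indecomposable injective `I i` over the `D̂_r` quiver:
`(dim I i) j` is the number of paths from `j` to `i`. -/
def dimI (r : ℕ) (i j : Fin (r + 1)) : ℤ :=
  if i = j then 1
  else if i.val ≤ 1 then 0
  else if i.val ≤ r - 2 then (if j.val ≤ i.val then 1 else 0)
  else (if j.val ≤ r - 2 then 1 else 0)

/-- The standard basis vector `e k` of `ℤ^{r+1}`. -/
def eV (r k : ℕ) : Fin (r + 1) → ℤ := fun j => if j.val = k then 1 else 0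

/-- `ρ = e₀ + e₁ + ⋯ + e_r`. -/
def rhoV (r : ℕ) : Fin (r + 1) → ℤ := fun _ => 1

/-- A linear map `τ` on `ℤ^{r+1}` is the Auslander–Reiten translation (on the level of
the Grothendieck group) iff `τ (dim P i) = - dim I i` for every vertex `i`. -/
def IsARTranslate (r : ℕ) (τ : (Fin (r + 1) → ℤ) →ₗ[ℤ] (Fin (r + 1) → ℤ)) : Prop :=
  ∀ i, τ (fun j => dimP r i j) = fun j => -dimI r i j

namespace IsARTranslate

variable {r : ℕ} {τ : (Fin (r + 1) → ℤ) →ₗ[ℤ] (Fin (r + 1) → ℤ)}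

theorem apply_dimP (hτ : IsARTranslate r τ) (i : Fin (r + 1)) : τ (dimP r i) = -dimI r i :=
  hτ i

end IsARTranslate

section Resolutions

variable {r : ℕ}

theorem eV_eq_dimP_sub_dimP_succ {k : ℕ} (h2 : 2 ≤ k) (hk : k ≤ r - 3) :
    eV r k = dimP r ⟨k, by omega⟩ - dimP r ⟨k + 1, by omega⟩ := by
  funext j
  simp only [eV, dimP, Pi.sub_apply, Fin.ext_iff]
  split_ifs <;> omega

theorem neg_dimI_add_dimI_succ {k : ℕ} (h2 : 2 ≤ k) (hk : k ≤ r - 3) :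
    -dimI r ⟨k, by omega⟩ + dimI r ⟨k + 1, by omega⟩ = eV r (k + 1) := by
  funext j
  simp only [eV, dimI, Pi.add_apply, Pi.neg_apply, Fin.ext_iff]
  split_ifs <;> omega

theorem eV_branch_eq_dimP_sub (hr : 4 ≤ r) :
    eV r (r - 2) = dimP r ⟨r - 2, by omega⟩ - dimP r ⟨r - 1, by omega⟩ - dimP r ⟨r, by omega⟩ := by
  funext j
  simp only [eV, dimP, Pi.sub_apply, Fin.ext_iff]
  split_ifs <;> omega

theorem neg_dimI_branch_add (hr : 4 ≤ r) :
    -dimI r ⟨r - 2, by omega⟩ + dimI r ⟨r - 1, by omega⟩ + dimI r ⟨r, by omega⟩ = rhoV r := by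
  funext j
  simp only [rhoV, dimI, Pi.add_apply, Pi.neg_apply, Fin.ext_iff]
  split_ifs <;> omega

theorem rhoV_eq_dimP_add_sub (hr : 4 ≤ r) :
    rhoV r = dimP r ⟨0, by omega⟩ + dimP r ⟨1, by omega⟩ - dimP r ⟨2, by omega⟩ := by
  funext j
  simp only [rhoV, dimP, Pi.add_apply, Pi.sub_apply, Fin.ext_iff]
  split_ifs <;> omega

theorem neg_dimI_zero_sub_dimI_one_add_dimI_two (hr : 4 ≤ r) :
    -dimI r ⟨0, by omega⟩ - dimI r ⟨1, by omega⟩ + dimI r ⟨2, by omega⟩ = eV r 2 := by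
  funext j
  simp only [eV, dimI, Pi.add_apply, Pi.sub_apply, Pi.neg_apply, Fin.ext_iff]
  split_ifs <;> omega

theorem eV_eq_dimP_of_sink {k : ℕ} (hk : r - 1 ≤ k) (hkr : k ≤ r) (hr : 3 ≤ r) :
    eV r k = dimP r ⟨k, by omega⟩ := by
  funext j
  simp only [eV, dimP, Fin.ext_iff]
  split_ifs <;> omega

theorem neg_dimI_penultimate (hr : 3 ≤ r) :
    -dimI r ⟨r - 1, by omega⟩ = -rhoV r + eV r r := by
  funext j
  simp only [eV, rhoV, dimI, Pi.add_apply, Pi.neg_apply, Fin.ext_iff]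
  split_ifs <;> omega

theorem neg_dimI_last (hr : 3 ≤ r) :
    -dimI r ⟨r, by omega⟩ = -rhoV r + eV r (r - 1) := by
  funext j
  simp only [eV, rhoV, dimI, Pi.add_apply, Pi.neg_apply, Fin.ext_iff]
  split_ifs <;> omega

theorem eV_source_eq_dimP_sub_dimP_two {k : ℕ} (hk : k ≤ 1) (hr : 4 ≤ r) :
    eV r k = dimP r ⟨k, by omega⟩ - dimP r ⟨2, by omega⟩ := by
  funext j
  simp only [eV, dimP, Pi.sub_apply, Fin.ext_iff]
  split_ifs <;> omega

theorem neg_dimI_source_add_dimI_two {k : ℕ} (hk : k ≤ 1) (hr : 4 ≤ r) :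
    -dimI r ⟨k, by omega⟩ + dimI r ⟨2, by omega⟩ = eV r (1 - k) + eV r 2 := by
  funext j
  simp only [eV, dimI, Pi.add_apply, Pi.neg_apply, Fin.ext_iff]
  split_ifs <;> omega

end Resolutions

/-- Explicit description of the AR translation `τ` of the `D̂_r` quiver on the
Grothendieck group `ℤ^{r+1}` (`r ≥ 4`). -/
theorem ar_translate_formulas (r : ℕ) (hr : 4 ≤ r)
    (τ : (Fin (r + 1) → ℤ) →ₗ[ℤ] (Fin (r + 1) → ℤ)) (hτ : IsARTranslate r τ) :
    (∀ k : ℕ, 2 ≤ k → k ≤ r - 3 → τ (eV r k) = eV r (k + 1)) ∧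
    τ (eV r (r - 2)) = rhoV r ∧
    τ (rhoV r) = eV r 2 ∧
    τ (eV r (r - 1)) = -rhoV r + eV r r ∧
    τ (eV r r) = -rhoV r + eV r (r - 1) ∧
    τ (eV r 0) = eV r 1 + eV r 2 ∧
    τ (eV r 1) = eV r 0 + eV r 2 := by
  have hr3 : 3 ≤ r := by omega
  refine ⟨fun k h2 hk => ?_, ?_, ?_, ?_, ?_, ?_, ?_⟩
  · rw [eV_eq_dimP_sub_dimP_succ h2 hk, map_sub, hτ.apply_dimP, hτ.apply_dimP, sub_neg_eq_add,
      neg_dimI_add_dimI_succ h2 hk]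
  · rw [eV_branch_eq_dimP_sub hr, map_sub, map_sub, hτ.apply_dimP, hτ.apply_dimP, hτ.apply_dimP,
      sub_neg_eq_add, sub_neg_eq_add, neg_dimI_branch_add hr]
  · rw [rhoV_eq_dimP_add_sub hr, map_sub, map_add, hτ.apply_dimP, hτ.apply_dimP, hτ.apply_dimP,
      ← sub_eq_add_neg, sub_neg_eq_add, neg_dimI_zero_sub_dimI_one_add_dimI_two hr]
  · rw [eV_eq_dimP_of_sink le_rfl (by omega) hr3, hτ.apply_dimP, neg_dimI_penultimate hr3]
  · rw [eV_eq_dimP_of_sink (by omega) le_rfl hr3, hτ.apply_dimP, neg_dimI_last hr3]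
  · rw [eV_source_eq_dimP_sub_dimP_two (k := 0) (by omega) hr, map_sub, hτ.apply_dimP, hτ.apply_dimP,
      sub_neg_eq_add, neg_dimI_source_add_dimI_two (k := 0) (by omega) hr]
  · rw [eV_source_eq_dimP_sub_dimP_two (k := 1) le_rfl hr, map_sub, hτ.apply_dimP, hτ.apply_dimP,
      sub_neg_eq_add, neg_dimI_source_add_dimI_two (k := 1) le_rfl hr]
end

section
/- For the D̂_r quiver, the Euler form satisfies χ(d, e) - χ(d, Σe) = s(d,e), where s is the Euler form of the disjoint union of two 2-cycle quivers on the vertex pairs {0,1} and {r-1,r}: s(d,e) = d₀e₀ + d₁e₁ + d_{r-1}e_{r-1} + d_r e_r - d₀e₁ - d₁e₀ - d_{r-1}e_r - d_r e_{r-1}. -/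
open Fin.NatCast

/-- The Euler form of the `D̂_r` quiver with arrows
`0→2, 1→2, 2→3, …, (r-3)→(r-2), (r-2)→(r-1), (r-2)→r`:
`χ(d,e) = ∑_i d_i e_i - ∑_{a : i→j} d_i e_j`. -/
def chiV (r : ℕ) (d e : Fin (r + 1) → ℤ) : ℤ :=
  ∑ i, d i * e i -
    (d 0 * e 2 + d 1 * e 2 +
      (∑ k ∈ Finset.Icc 2 (r - 3), d (k : Fin (r + 1)) * e ((k + 1 : ℕ) : Fin (r + 1))) +
      d ((r - 2 : ℕ) : Fin (r + 1)) * e ((r - 1 : ℕ) : Fin (r + 1)) +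
      d ((r - 2 : ℕ) : Fin (r + 1)) * e ((r : ℕ) : Fin (r + 1)))

/-- The involution `Σ` of `ℤ^{r+1}` swapping coordinates `0 ↔ 1` and `(r-1) ↔ r` and
fixing the others. -/
def SigmaV (r : ℕ) (d : Fin (r + 1) → ℤ) : Fin (r + 1) → ℤ :=
  fun j => d (((if j.val = 0 then 1 else if j.val = 1 then 0
    else if j.val = r - 1 then r else if j.val = r then r - 1 else j.val : ℕ)) : Fin (r + 1))

/-! `χ(d, e)` is the diagonal pairing `∑ dᵢ eᵢ` minus a sum of terms `dᵢ eⱼ` over the arrows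
`i → j`. The heads `j` range over `2, …, r`; `Σ` fixes `2, …, r - 2` and swaps the heads `r - 1`
and `r` of the two arrows leaving `r - 2`, so the arrow sum is unchanged when `e` is replaced by
`Σ e`. The difference therefore comes from the diagonal pairing alone, where only the four
coordinates moved by `Σ` contribute. -/

section SigmaV

variable {r : ℕ} (e : Fin (r + 1) → ℤ)

theorem SigmaV_apply_of_val_ne {i : Fin (r + 1)} (h0 : i.val ≠ 0) (h1 : i.val ≠ 1)
    (ha : i.val ≠ r - 1) (hb : i.val ≠ r) : SigmaV r e i = e i := by
  simp only [SigmaV, if_neg h0, if_neg h1, if_neg ha, if_neg hb, Fin.cast_val_eq_self]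

theorem SigmaV_natCast_of_two_le_of_le {n : ℕ} (h2 : 2 ≤ n) (hn : n ≤ r - 2) :
    SigmaV r e n = e n := by
  have hval : ((n : Fin (r + 1)) : ℕ) = n := Fin.val_cast_of_lt (by omega)
  exact SigmaV_apply_of_val_ne e (by omega) (by omega) (by omega) (by omega)

theorem SigmaV_zero : SigmaV r e 0 = e 1 := by
  simp [SigmaV]

theorem SigmaV_one (hr : 1 ≤ r) : SigmaV r e 1 = e 0 := by
  simp [SigmaV, Nat.mod_eq_of_lt (show 1 < r + 1 by omega)]

theorem SigmaV_natCast_sub_one (hr : 3 ≤ r) :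
    SigmaV r e ((r - 1 : ℕ) : Fin (r + 1)) = e (r : ℕ) := by
  simp only [SigmaV, Fin.val_cast_of_lt (show r - 1 < r + 1 by omega)]
  rw [if_neg (by omega), if_neg (by omega), if_pos trivial]

theorem SigmaV_natCast_self (hr : 3 ≤ r) :
    SigmaV r e (r : ℕ) = e ((r - 1 : ℕ) : Fin (r + 1)) := by
  simp only [SigmaV, Fin.val_cast_of_lt (show r < r + 1 by omega)]
  rw [if_neg (by omega), if_neg (by omega), if_neg (by omega), if_pos trivial]

theorem sum_mul_sub_sum_mul_SigmaV (hr : 3 ≤ r) (d : Fin (r + 1) → ℤ) :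
    ∑ i, d i * e i - ∑ i, d i * SigmaV r e i =
      d 0 * e 0 + d 1 * e 1 +
        d ((r - 1 : ℕ) : Fin (r + 1)) * e ((r - 1 : ℕ) : Fin (r + 1)) +
        d ((r : ℕ) : Fin (r + 1)) * e ((r : ℕ) : Fin (r + 1)) -
        d 0 * e 1 - d 1 * e 0 -
        d ((r - 1 : ℕ) : Fin (r + 1)) * e ((r : ℕ) : Fin (r + 1)) -
        d ((r : ℕ) : Fin (r + 1)) * e ((r - 1 : ℕ) : Fin (r + 1)) := by
  set a : Fin (r + 1) := ((r - 1 : ℕ) : Fin (r + 1))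
  set b : Fin (r + 1) := ((r : ℕ) : Fin (r + 1))
  have h1 : ((1 : Fin (r + 1)) : ℕ) = 1 := Fin.val_cast_of_lt (n := r + 1) (a := 1) (by omega)
  have ha : (a : ℕ) = r - 1 := Fin.val_cast_of_lt (by omega)
  have hb : (b : ℕ) = r := Fin.val_cast_of_lt (by omega)
  have hsupp : ∀ i ∉ ({0, 1, a, b} : Finset _), d i * e i - d i * SigmaV r e i = 0 := by
    intro i hi
    simp only [Finset.mem_insert, Finset.mem_singleton, not_or, Fin.ext_iff, Fin.val_zero,
      h1, ha, hb] at hi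
    rw [SigmaV_apply_of_val_ne e (by omega) (by omega) (by omega) (by omega), sub_self]
  rw [← Finset.sum_sub_distrib, ← Finset.sum_subset (Finset.subset_univ _) fun i _ => hsupp i]
  rw [Finset.sum_insert, Finset.sum_insert, Finset.sum_insert, Finset.sum_singleton,
    SigmaV_zero, SigmaV_one e (by omega), SigmaV_natCast_sub_one e hr, SigmaV_natCast_self e hr]
  · ring
  all_goals
    simp only [Finset.mem_insert, Finset.mem_singleton, Fin.ext_iff, Fin.val_zero, h1, ha, hb]
    omega

theorem chiV_sub_chiV_SigmaV (hr : 4 ≤ r) (d : Fin (r + 1) → ℤ) :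
    chiV r d e - chiV r d (SigmaV r e) = ∑ i, d i * e i - ∑ i, d i * SigmaV r e i := by
  have h2 : SigmaV r e 2 = e 2 := by
    simpa using SigmaV_natCast_of_two_le_of_le e (n := 2) le_rfl (by omega)
  have hmid : ∑ k ∈ Finset.Icc 2 (r - 3), d k * SigmaV r e ((k + 1 : ℕ) : Fin (r + 1)) =
      ∑ k ∈ Finset.Icc 2 (r - 3), d k * e ((k + 1 : ℕ) : Fin (r + 1)) := by
    refine Finset.sum_congr rfl fun k hk => ?_
    rw [Finset.mem_Icc] at hk
    rw [SigmaV_natCast_of_two_le_of_le e (by omega) (by omega)]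
  rw [chiV, chiV, h2, hmid, SigmaV_natCast_sub_one e (by omega),
    SigmaV_natCast_self e (by omega)]
  ring

end SigmaV

/-- `χ(d,e) - χ(d,Σe) = s(d,e)`, where `s` is the Euler form of the disjoint union of
two 2-cycle quivers on the vertex pairs `{0,1}` and `{r-1,r}`. -/
theorem chi_sub_chi_sigma (r : ℕ) (hr : 4 ≤ r) (d e : Fin (r + 1) → ℤ) :
    chiV r d e - chiV r d (SigmaV r e) =
      d 0 * e 0 + d 1 * e 1 +
        d ((r - 1 : ℕ) : Fin (r + 1)) * e ((r - 1 : ℕ) : Fin (r + 1)) +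
        d ((r : ℕ) : Fin (r + 1)) * e ((r : ℕ) : Fin (r + 1)) -
        d 0 * e 1 - d 1 * e 0 -
        d ((r - 1 : ℕ) : Fin (r + 1)) * e ((r : ℕ) : Fin (r + 1)) -
        d ((r : ℕ) : Fin (r + 1)) * e ((r - 1 : ℕ) : Fin (r + 1)) := by
  rw [chiV_sub_chiV_SigmaV e hr, sum_mul_sub_sum_mul_SigmaV e (by omega)]
end
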